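/- arXiv:2603.13096 — 2 statements merged into one kernel-verified Lean document; each statement's English description precedes it below -/
import Mathlib

section
/- Let G be a balanced group and let C be an infinite cyclic subgroup of G. Then for all positive integers k ≤ m, N_G(k!C) ⊆ N_G(m!C), where k!C denotes the subgroup {c^{k!} : c ∈ C}, and moreover N_G[C] equals the union over all k ≥ 1 of N_G(k!C). -/
/-!
If `g` normalizes `⟨x⟩` then `g x g⁻¹ = x ^ s` for some `s`, so `g x ^ t g⁻¹ = (x ^ t) ^ s`:
normalizers of `⟨x ^ a⟩` grow along divisibility of `a`, which gives the nesting since `k! ∣ m!`.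
If `g` commensurates `C = ⟨c⟩`, then `gCg⁻¹ ∩ C` has finite index in the infinite group `gCg⁻¹`,
so it contains some `g c ^ a g⁻¹ = c ^ b ≠ 1`. Balancedness forces `b = ±a`, so `g` normalizes
`⟨c ^ a⟩`, hence `⟨c ^ |a|!⟩`. Conversely `⟨c ^ k!⟩` is commensurable with `C`, and every
subgroup's normalizer lies in its commensurator, which only depends on the commensurability class.
-/

def IsBalanced (G : Type*) [Group G] : Prop :=
  ∀ g h : G, ¬ IsOfFinOrder h → ∀ k l : ℤ, k ≠ 0 → l ≠ 0 →
    g * h ^ k * g⁻¹ = h ^ l → |k| = |l|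

open Subgroup Pointwise

namespace Subgroup

variable {G : Type*} [Group G]

theorem zpow_mem_zpowers_zpow {x y : G} (h : y ∈ zpowers x) (t : ℤ) :
    y ^ t ∈ zpowers (x ^ t) := by
  obtain ⟨s, rfl⟩ := mem_zpowers_iff.1 h
  rw [← zpow_mul, mul_comm, zpow_mul]
  exact zpow_mem (mem_zpowers _) s

theorem zpowers_zpow_eq_of_zpowers_eq {x y : G} (h : zpowers y = zpowers x) (t : ℤ) :
    zpowers (y ^ t) = zpowers (x ^ t) :=
  le_antisymm (zpowers_le.2 (zpow_mem_zpowers_zpow (h ▸ mem_zpowers y) t))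
    (zpowers_le.2 (zpow_mem_zpowers_zpow (h ▸ mem_zpowers x) t))

theorem zpowers_zpow_eq_of_abs_eq (x : G) {a b : ℤ} (h : |a| = |b|) :
    zpowers (x ^ a) = zpowers (x ^ b) := by
  rcases abs_eq_abs.1 h with rfl | rfl
  · rfl
  · rw [zpow_neg, zpowers_inv]

theorem mem_normalizer_zpowers_iff {g x : G} :
    g ∈ normalizer (zpowers x : Set G) ↔ zpowers (g * x * g⁻¹) = zpowers x := by
  rw [mem_normalizer_iff_map_conj_eq, MonoidHom.map_zpowers]
  rfl

theorem normalizer_zpowers_le_normalizer_zpowers_zpow (x : G) (t : ℤ) :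
    normalizer (zpowers x : Set G) ≤ normalizer (zpowers (x ^ t) : Set G) := by
  intro g hg
  rw [mem_normalizer_zpowers_iff] at hg ⊢
  rw [← conj_zpow]
  exact zpowers_zpow_eq_of_zpowers_eq hg t

theorem normalizer_zpowers_zpow_le_of_dvd (x : G) {a b : ℤ} (h : a ∣ b) :
    normalizer (zpowers (x ^ a) : Set G) ≤ normalizer (zpowers (x ^ b) : Set G) := by
  obtain ⟨t, rfl⟩ := h
  rw [zpow_mul]
  exact normalizer_zpowers_le_normalizer_zpowers_zpow _ t

theorem relIndex_zpowers_zpow_ne_zero (x : G) {n : ℤ} (hn : n ≠ 0) :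
    (zpowers (x ^ n)).relIndex (zpowers x) ≠ 0 := by
  -- pull back along `m ↦ x ^ m`: the preimage contains `nℤ`, which has index `|n|` in `ℤ`
  change (zpowers (x ^ n)).relIndex (zpowersHom G x).range ≠ 0
  rw [← index_comap]
  have hle : (AddSubgroup.zmultiples n).toSubgroup ≤ (zpowers (x ^ n)).comap (zpowersHom G x) := by
    intro m hm
    obtain ⟨k, hk⟩ := AddSubgroup.mem_zmultiples_iff.1 ((Multiplicative.mem_toSubgroup _ _).1 hm)
    rw [mem_comap, zpowersHom_apply, ← hk, smul_eq_mul, mul_comm, zpow_mul]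
    exact zpow_mem (mem_zpowers _) k
  refine ne_zero_of_dvd_ne_zero ?_ (index_dvd_of_le hle)
  rw [AddSubgroup.index_toSubgroup, Int.index_zmultiples]
  omega

theorem commensurable_zpowers_zpow (x : G) {n : ℤ} (hn : n ≠ 0) :
    Commensurable (zpowers (x ^ n)) (zpowers x) :=
  ⟨relIndex_zpowers_zpow_ne_zero x hn, by
    rw [relIndex_eq_one.2 (zpowers_le.2 (zpow_mem (mem_zpowers x) n))]
    exact one_ne_zero⟩

theorem normalizer_le_commensurator (H : Subgroup G) :
    normalizer (H : Set G) ≤ Commensurable.commensurator H := by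
  intro g hg
  rw [Commensurable.commensurator_mem_iff, conjAct_pointwise_smul_eq_self hg]

theorem exists_ne_one_mem_inf_of_relIndex_ne_zero {H K : Subgroup G} (h : H.relIndex K ≠ 0)
    [Infinite K] : ∃ y ∈ H ⊓ K, y ≠ 1 := by
  refine (H ⊓ K).bot_or_exists_ne_one.resolve_left fun hbot => h ?_
  rw [← inf_relIndex_right, hbot, relIndex_bot_left, Nat.card_eq_zero_of_infinite]

theorem exists_conj_zpow_eq_zpow_of_mem_commensurator {c g : G} (hc : ¬IsOfFinOrder c)
    (hg : g ∈ Commensurable.commensurator (zpowers c)) :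
    ∃ a b : ℤ, a ≠ 0 ∧ b ≠ 0 ∧ g * c ^ a * g⁻¹ = c ^ b := by
  have : Infinite (zpowers c) := Set.infinite_coe_iff.2 (infinite_zpowers.2 hc)
  obtain ⟨y, ⟨hy_conj, hy⟩, hy_ne⟩ := exists_ne_one_mem_inf_of_relIndex_ne_zero
    ((Commensurable.commensurator_mem_iff _ g).1 hg).1
  obtain ⟨z, hz, rfl⟩ := (mem_smul_pointwise_iff_exists _ _ _).1 hy_conj
  obtain ⟨a, rfl⟩ := mem_zpowers_iff.1 hz
  obtain ⟨b, hb⟩ := mem_zpowers_iff.1 hy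
  rw [ConjAct.toConjAct_smul] at hb hy_ne
  refine ⟨a, b, ?_, ?_, hb.symm⟩
  · rintro rfl
    exact hy_ne (by rw [zpow_zero, mul_one, mul_inv_cancel])
  · rintro rfl
    exact hy_ne (by rw [← hb, zpow_zero])

end Subgroup

theorem IsBalanced.exists_mem_normalizer_zpowers_zpow_of_mem_commensurator {G : Type*} [Group G]
    (hG : IsBalanced G) {c g : G} (hc : ¬IsOfFinOrder c)
    (hg : g ∈ Commensurable.commensurator (zpowers c)) :
    ∃ a : ℤ, a ≠ 0 ∧ g ∈ normalizer (zpowers (c ^ a) : Set G) := by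
  obtain ⟨a, b, ha, hb, hab⟩ := exists_conj_zpow_eq_zpow_of_mem_commensurator hc hg
  refine ⟨a, ha, mem_normalizer_zpowers_iff.2 ?_⟩
  rw [hab]
  exact zpowers_zpow_eq_of_abs_eq c (hG g c hc a b ha hb hab).symm

/-- For a balanced group `G` and an infinite cyclic subgroup `C = ⟨c⟩`, the normalizers of
the subgroups `k!C = ⟨c^{k!}⟩` form a nested increasing family whose union is the
commensurator `N_G[C]`. -/
theorem commensurator_eq_iUnion_normalizers {G : Type*} [Group G] (hG : IsBalanced G)
    (c : G) (hc : ¬ IsOfFinOrder c) :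
    (∀ k m : ℕ, 0 < k → k ≤ m →
      Subgroup.normalizer (Subgroup.zpowers (c ^ Nat.factorial k) : Set G) ≤
        Subgroup.normalizer (Subgroup.zpowers (c ^ Nat.factorial m) : Set G)) ∧
    (∀ g : G, g ∈ Subgroup.Commensurable.commensurator (Subgroup.zpowers c) ↔
      ∃ k : ℕ, 1 ≤ k ∧ g ∈ Subgroup.normalizer (Subgroup.zpowers (c ^ Nat.factorial k) : Set G)) := by
  refine ⟨fun k m _ hkm => ?_, fun g => ⟨fun hg => ?_, ?_⟩⟩
  · rw [← zpow_natCast, ← zpow_natCast]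
    exact normalizer_zpowers_zpow_le_of_dvd c (mod_cast Nat.factorial_dvd_factorial hkm)
  · obtain ⟨a, ha, hga⟩ := hG.exists_mem_normalizer_zpowers_zpow_of_mem_commensurator hc hg
    have ha_dvd : a ∣ (a.natAbs.factorial : ℤ) :=
      Int.natAbs_dvd.1 (mod_cast Nat.dvd_factorial (Int.natAbs_pos.2 ha) le_rfl)
    refine ⟨a.natAbs, Int.natAbs_pos.2 ha, ?_⟩
    rw [← zpow_natCast]
    exact normalizer_zpowers_zpow_le_of_dvd c ha_dvd hga
  · rintro ⟨k, -, hg⟩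
    have hC : Commensurable (zpowers (c ^ (k.factorial : ℤ))) (zpowers c) :=
      commensurable_zpowers_zpow c (mod_cast k.factorial_ne_zero)
    rw [← zpow_natCast] at hg
    rw [← hC.eq]
    exact normalizer_le_commensurator _ hg
end

section
/- Consider a short exact sequence of groups 1 → N → G → Q → 1. If Q is balanced and N satisfies Condition MAX (every infinite cyclic subgroup of N is contained in a unique maximal virtually cyclic subgroup of N), then G is balanced. -/
def IsVirtuallyCyclic (G : Type*) [Group G] : Prop :=
  ∃ H : Subgroup G, IsCyclic H ∧ H.FiniteIndex

def ConditionMAX (G : Type*) [Group G] : Prop :=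
  ∀ h : G, ¬ IsOfFinOrder h →
    ∃! M : Subgroup G, IsVirtuallyCyclic M ∧ Subgroup.zpowers h ≤ M ∧
      ∀ M' : Subgroup G, IsVirtuallyCyclic M' → M ≤ M' → M = M'

open Subgroup

section ZPowers

variable {G : Type*} [Group G]

theorem not_isOfFinOrder_zpow {x : G} (hx : ¬IsOfFinOrder x) {k : ℤ} (hk : k ≠ 0) :
    ¬IsOfFinOrder (x ^ k) := by
  intro hxk
  obtain ⟨n, hn, hxkn⟩ := isOfFinOrder_iff_zpow_eq_one.1 hxk
  exact hx (isOfFinOrder_iff_zpow_eq_one.2 ⟨k * n, mul_ne_zero hk hn, by rwa [zpow_mul]⟩)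

theorem index_zpowers_ofAdd (t : ℤ) : (zpowers (Multiplicative.ofAdd t)).index = t.natAbs := by
  rw [← Int.index_zmultiples t, ← AddSubgroup.index_toSubgroup]
  rfl

theorem relIndex_zpowers_zpow {x : G} (hx : ¬IsOfFinOrder x) (t : ℤ) :
    (zpowers (x ^ t)).relIndex (zpowers x) = t.natAbs := by
  have hinj : Function.Injective (zpowersHom G x) := injective_zpow_iff_not_isOfFinOrder.2 hx
  have hmap : (zpowers (Multiplicative.ofAdd t)).map (zpowersHom G x) = zpowers (x ^ t) := by
    rw [MonoidHom.map_zpowers, zpowersHom_apply, toAdd_ofAdd]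
  rw [← hmap, ← range_zpowersHom x, MonoidHom.range_eq_map,
    relIndex_map_map_of_injective _ _ hinj, relIndex_top_right, index_zpowers_ofAdd]

theorem subgroupOf_zpowers {L : Subgroup G} {x : G} (hx : x ∈ L) :
    (zpowers x).subgroupOf L = zpowers ⟨x, hx⟩ := by
  ext y
  simp [mem_subgroupOf, mem_zpowers_iff, Subtype.ext_iff]

theorem natAbs_eq_of_map_zpow_eq_zpow {M : Subgroup G} {a : G} (ha : ¬IsOfFinOrder a)
    (haM : a ∈ M) (hfin : (zpowers a).relIndex M ≠ 0) {φ : G →* G}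
    (hφ : Function.Injective φ) (hφM : M.map φ = M) {k l : ℤ} (hkl : φ (a ^ k) = a ^ l) :
    k.natAbs = l.natAbs := by
  have hrel : ∀ t : ℤ, (zpowers (a ^ t)).relIndex M = t.natAbs * (zpowers a).relIndex M :=
    fun t => by
      rw [← relIndex_mul_relIndex _ _ _ (zpowers_le.2 (zpow_mem_zpowers a t))
        (zpowers_le.2 haM), relIndex_zpowers_zpow ha]
  have hmap : (zpowers (a ^ k)).map φ = zpowers (a ^ l) := by
    rw [MonoidHom.map_zpowers, hkl]
  have hinv : (zpowers (a ^ k)).relIndex M = (zpowers (a ^ l)).relIndex M := by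
    rw [← hmap, ← relIndex_map_map_of_injective _ _ hφ, hφM]
  rw [hrel, hrel] at hinv
  exact Nat.eq_of_mul_eq_mul_right (Nat.pos_of_ne_zero hfin) hinv

end ZPowers

namespace IsVirtuallyCyclic

variable {G G' : Type*} [Group G] [Group G']

theorem of_mulEquiv (e : G ≃* G') (hG : IsVirtuallyCyclic G) : IsVirtuallyCyclic G' := by
  obtain ⟨H, hH, hfin⟩ := hG
  refine ⟨H.map e.toMonoidHom, isCyclic_of_surjective (e.subgroupMap H).toMonoidHom
    (e.subgroupMap H).surjective, ⟨?_⟩⟩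
  rw [map_equiv_eq_comap_symm', index_comap_of_surjective _ e.symm.surjective]
  exact hfin.index_ne_zero

/-- Some power `x^n` lies in a cyclic subgroup `⟨c⟩` of finite index, say `x^n = c^t` with
`t ≠ 0`; then `⟨c^t⟩ ≤ ⟨x⟩` has index `|t| [G : ⟨c⟩]`. -/
theorem index_zpowers_ne_zero (hG : IsVirtuallyCyclic G) {x : G} (hx : ¬IsOfFinOrder x) :
    (zpowers x).index ≠ 0 := by
  obtain ⟨H, hH, hfin⟩ := hG
  obtain ⟨c, hc⟩ := isCyclic_iff_exists_zpowers_eq_top.1 hH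
  obtain ⟨n, hn, -, hxn⟩ := exists_pow_mem_of_index_ne_zero hfin.index_ne_zero x
  obtain ⟨t, hct⟩ := mem_zpowers_iff.1 (hc ▸ mem_top (⟨x ^ n, hxn⟩ : H))
  replace hct : (c : G) ^ t = x ^ n := by simpa using congrArg Subtype.val hct
  have hxn_inf : ¬IsOfFinOrder (x ^ n) := fun h => hx (h.of_pow hn.ne')
  have ht : t ≠ 0 := by
    rintro rfl
    exact hxn_inf (by simp [← hct])
  have hc_inf : ¬IsOfFinOrder (c : G) := fun h => hxn_inf (hct ▸ h.zpow)
  have hHc : zpowers (c : G) = H := by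
    have := MonoidHom.map_zpowers H.subtype c
    rwa [hc, ← MonoidHom.range_eq_map, range_subtype, eq_comm] at this
  have hindex : (zpowers ((c : G) ^ t)).index = t.natAbs * H.index := by
    rw [← relIndex_mul_index (zpowers_le.2 (zpow_mem_zpowers _ t)), relIndex_zpowers_zpow hc_inf,
      hHc]
  have hle : zpowers ((c : G) ^ t) ≤ zpowers x :=
    zpowers_le.2 (hct ▸ pow_mem (mem_zpowers x) n)
  refine ne_zero_of_dvd_ne_zero ?_ (index_dvd_of_le hle)
  rw [hindex]
  exact mul_ne_zero (Int.natAbs_ne_zero.2 ht) hfin.index_ne_zero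

theorem relIndex_zpowers_ne_zero {L : Subgroup G} (hL : IsVirtuallyCyclic L) {x : G}
    (hxL : x ∈ L) (hx : ¬IsOfFinOrder x) : (zpowers x).relIndex L ≠ 0 := by
  rw [relIndex, subgroupOf_zpowers hxL]
  exact hL.index_zpowers_ne_zero (by rwa [← Submonoid.isOfFinOrder_coe])

end IsVirtuallyCyclic

section Maximal

variable {G G' : Type*} [Group G] [Group G']

theorem maximal_isVirtuallyCyclic_map (φ : G ≃* G') {M : Subgroup G}
    (hM : Maximal (fun K : Subgroup G => IsVirtuallyCyclic K) M) :
    Maximal (fun K : Subgroup G' => IsVirtuallyCyclic K) (M.map φ.toMonoidHom) := by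
  let e := φ.mapSubgroup
  refine ⟨hM.prop.of_mulEquiv (φ.subgroupMap M), fun K hK hMK => ?_⟩
  have hK' : IsVirtuallyCyclic (e.symm K) := hK.of_mulEquiv (φ.symm.subgroupMap K)
  rw [← e.apply_symm_apply K]
  exact e.monotone (hM.2 hK' (e.le_symm_apply.2 hMK))

namespace ConditionMAX

theorem exists_maximal (hG : ConditionMAX G) {x : G} (hx : ¬IsOfFinOrder x) :
    ∃ M : Subgroup G, Maximal (fun K : Subgroup G => IsVirtuallyCyclic K) M ∧ x ∈ M := by
  obtain ⟨M, ⟨hM, hxM, hmax⟩, -⟩ := hG x hx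
  exact ⟨M, maximal_iff.2 ⟨hM, hmax⟩, zpowers_le.1 hxM⟩

theorem eq_of_maximal (hG : ConditionMAX G) {x : G} (hx : ¬IsOfFinOrder x) {M M' : Subgroup G}
    (hM : Maximal (fun K : Subgroup G => IsVirtuallyCyclic K) M)
    (hM' : Maximal (fun K : Subgroup G => IsVirtuallyCyclic K) M') (hxM : x ∈ M)
    (hxM' : x ∈ M') : M = M' := by
  rw [maximal_iff] at hM hM'
  exact (hG x hx).unique ⟨hM.1, zpowers_le.2 hxM, hM.2⟩ ⟨hM'.1, zpowers_le.2 hxM', hM'.2⟩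

/-- Both `M` and its image are maximal virtually cyclic subgroups containing `a^l`. -/
theorem map_eq_self_of_map_zpow_eq_zpow (hG : ConditionMAX G) (φ : G ≃* G) {a : G}
    (ha : ¬IsOfFinOrder a) {M : Subgroup G}
    (hM : Maximal (fun K : Subgroup G => IsVirtuallyCyclic K) M) (haM : a ∈ M) {k l : ℤ}
    (hl : l ≠ 0) (hkl : φ (a ^ k) = a ^ l) : M.map φ.toMonoidHom = M :=
  hG.eq_of_maximal (not_isOfFinOrder_zpow ha hl) (maximal_isVirtuallyCyclic_map φ hM) hM
    (hkl ▸ mem_map_of_mem _ (zpow_mem haM k)) (zpow_mem haM l)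

end ConditionMAX

end Maximal

theorem balanced_of_ses_conditionMAX_general {G Q : Type*} [Group G] [Group Q]
    (p : G →* Q)
    (hQ : IsBalanced Q) (hN : ConditionMAX p.ker) : IsBalanced G := by
  intro g h hh k l hk hl hconj
  by_cases hq : IsOfFinOrder (p h)
  swap
  · exact hQ (p g) (p h) hq k l hk hl (by simpa using congrArg p hconj)
  let a : p.ker := ⟨h ^ orderOf (p h), by simp [pow_orderOf_eq_one]⟩
  have ha : ¬IsOfFinOrder a := by
    rw [← Submonoid.isOfFinOrder_coe]
    exact fun hfin => hh (hfin.of_pow hq.orderOf_pos.ne')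
  let φ : MulAut p.ker := MulAut.conjNormal g
  have hkl : φ (a ^ k) = a ^ l := by
    ext
    simp only [φ, a, MulAut.conjNormal_apply, coe_zpow, ← zpow_natCast, ← zpow_mul]
    rw [mul_comm, zpow_mul, ← conj_zpow, hconj, ← zpow_mul, mul_comm]
  obtain ⟨M, hM, haM⟩ := hN.exists_maximal ha
  have hnat := natAbs_eq_of_map_zpow_eq_zpow ha haM (hM.prop.relIndex_zpowers_ne_zero haM ha)
    φ.injective (hN.map_eq_self_of_map_zpow_eq_zpow φ ha hM haM hl hkl) hkl
  rw [Int.abs_eq_natAbs, Int.abs_eq_natAbs, hnat]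

theorem balanced_of_ses_conditionMAX {G Q : Type*} [Group G] [Group Q]
    (p : G →* Q) (hp : Function.Surjective p)
    (hQ : IsBalanced Q) (hN : ConditionMAX p.ker) : IsBalanced G :=
  balanced_of_ses_conditionMAX_general p hQ hN
end
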